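/- arXiv:2605.02816 — 7 statements merged into one kernel-verified Lean document; each statement's English description precedes it below -/
import Mathlib

section
/- Let k : ℕ → ℝ satisfy k(j) > 0 for all j and ∑_j k(j)² < ∞. Then the set of all x in ℓ² such that the family j ↦ |x(j)|²/k(j)² is summable with ∑'_j |x(j)|²/k(j)² ≤ 1 is a compact subset of ℓ². -/
/-!
The set lies inside the "Hilbert cube" `{x | ∀ j, ‖x j‖ ≤ k j}` and is closed, being cut out by the
continuous constraints `∑ j ∈ s, ‖x j‖ ^ 2 / k j ^ 2 ≤ 1` over all finite `s`. The cube is compact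
because `k` is square-summable: truncating to a finite set of coordinates moves each point of the
cube by at most the tail of `k`, and the truncated cube is a product of finitely many closed balls.
-/

open Metric
open scoped ENNReal

theorem Metric.totallyBounded_of_forall_exists_isCompact {X : Type*} [PseudoMetricSpace X]
    {s : Set X} (h : ∀ ε > 0, ∃ K : Set X, IsCompact K ∧ ∀ x ∈ s, ∃ y ∈ K, dist x y < ε) :
    TotallyBounded s := by
  refine totallyBounded_iff.2 fun ε hε => ?_
  obtain ⟨K, hK, hsK⟩ := h (ε / 2) (half_pos hε)
  obtain ⟨t, ht, hKt⟩ := totallyBounded_iff.1 hK.totallyBounded (ε / 2) (half_pos hε)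
  refine ⟨t, ht, fun x hx => ?_⟩
  obtain ⟨y, hyK, hxy⟩ := hsK x hx
  obtain ⟨z, hz, hyz⟩ := Set.mem_iUnion₂.1 (hKt hyK)
  refine Set.mem_iUnion₂.2 ⟨z, hz, ?_⟩
  calc dist x z ≤ dist x y + dist y z := dist_triangle x y z
    _ < ε / 2 + ε / 2 := add_lt_add hxy hyz
    _ = ε := add_halves ε

theorem isClosed_setOf_summable_and_tsum_le {X ι : Type*} [TopologicalSpace X] {g : ι → X → ℝ}
    (hg : ∀ i, Continuous (g i)) (hg₀ : ∀ i x, 0 ≤ g i x) (c : ℝ) :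
    IsClosed {x | Summable (fun i => g i x) ∧ ∑' i, g i x ≤ c} := by
  have hsets : {x | Summable (fun i => g i x) ∧ ∑' i, g i x ≤ c} =
      ⋂ s : Finset ι, {x | ∑ i ∈ s, g i x ≤ c} := by
    ext x
    simp only [Set.mem_ofPred_eq, Set.mem_iInter]
    constructor
    · rintro ⟨hsum, hle⟩ s
      exact (hsum.sum_le_tsum s fun i _ => hg₀ i x).trans hle
    · intro h
      exact ⟨summable_of_sum_le (hg₀ · x) h, Real.tsum_le_of_sum_le (hg₀ · x) h⟩
  rw [hsets]
  exact isClosed_iInter fun s => isClosed_le (continuous_finsetSum s fun i _ => hg i)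
    continuous_const

namespace lp

variable {α : Type*} {E : α → Type*} [∀ i, NormedAddCommGroup (E i)] {p : ℝ≥0∞}

theorem isClosed_setOf_forall_norm_apply_le [Fact (1 ≤ p)] (k : α → ℝ) :
    IsClosed {x : lp E p | ∀ i, ‖x i‖ ≤ k i} := by
  simp only [Set.ofPred_forall]
  exact isClosed_iInter fun i =>
    isClosed_le (lipschitzWith_one_eval p i).continuous.norm continuous_const

variable [DecidableEq α]

theorem norm_sub_sum_single_rpow (hp : 0 < p.toReal) (f : lp E p) (s : Finset α) :
    ‖f - ∑ i ∈ s, lp.single p i (f i)‖ ^ p.toReal = ∑' i : {i // i ∉ s}, ‖f i‖ ^ p.toReal := by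
  rw [lp.norm_compl_sum_single hp, lp.norm_rpow_eq_tsum hp,
    ← ((lp.memℓp f).summable hp).sum_add_tsum_compl (s := s), add_sub_cancel_left]
  rfl

variable [Fact (1 ≤ p)] [∀ i, ProperSpace (E i)]

theorem totallyBounded_setOf_forall_norm_apply_le (hp : p ≠ ∞) {k : α → ℝ} (hk : Memℓp k p) :
    TotallyBounded {x : lp E p | ∀ i, ‖x i‖ ≤ k i} := by
  have hp₀ : 0 < p.toReal := ENNReal.toReal_pos (zero_lt_one.trans_le Fact.out).ne' hp
  refine totallyBounded_of_forall_exists_isCompact fun ε hε => ?_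
  obtain ⟨s, hs⟩ := ((tendsto_tsum_compl_atTop_zero fun i => ‖k i‖ ^ p.toReal).eventually
    (gt_mem_nhds (Real.rpow_pos_of_pos hε p.toReal))).exists
  let truncate : (∀ i : s, E i) → lp E p := fun y => ∑ i : s, lp.single p i (y i)
  have htruncate : Continuous truncate :=
    continuous_finsetSum _ fun i _ => (isometry_single (i : α)).continuous.comp (continuous_apply i)
  refine ⟨truncate '' Set.univ.pi fun i => closedBall 0 (k i),
    (isCompact_univ_pi fun i : s => isCompact_closedBall (0 : E i) (k i)).image htruncate,
    fun x hx => ⟨truncate fun i => x i, Set.mem_image_of_mem _ fun i _ => by simpa using hx i, ?_⟩⟩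
  have htail : ‖x - ∑ i ∈ s, lp.single p i (x i)‖ ^ p.toReal < ε ^ p.toReal := by
    rw [norm_sub_sum_single_rpow hp₀]
    refine lt_of_le_of_lt (Summable.tsum_le_tsum (fun i => ?_) ?_ ?_) hs
    · exact Real.rpow_le_rpow (norm_nonneg _) ((hx i).trans (le_abs_self _)) hp₀.le
    · exact ((lp.memℓp x).summable hp₀).subtype _
    · exact (hk.summable hp₀).subtype _
  rw [dist_eq_norm, show truncate (fun i => x i) = ∑ i ∈ s, lp.single p i (x i) from
    Finset.sum_coe_sort s fun i => lp.single p i (x i)]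
  exact (Real.rpow_lt_rpow_iff (norm_nonneg _) hε.le hp₀).1 htail

theorem isCompact_setOf_forall_norm_apply_le (hp : p ≠ ∞) {k : α → ℝ} (hk : Memℓp k p) :
    IsCompact {x : lp E p | ∀ i, ‖x i‖ ≤ k i} :=
  (totallyBounded_setOf_forall_norm_apply_le hp hk).isCompact_of_isClosed
    (isClosed_setOf_forall_norm_apply_le k)

end lp

theorem stmt1 (k : ℕ → ℝ) (hk : ∀ j, 0 < k j) (hk_sum : Summable fun j => k j ^ 2) :
    IsCompact {x : lp (fun _ : ℕ => ℂ) 2 |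
      Summable (fun j => ‖x j‖ ^ 2 / k j ^ 2) ∧ ∑' j, ‖x j‖ ^ 2 / k j ^ 2 ≤ 1} := by
  have hk_mem : Memℓp k 2 := memℓp_gen (by simpa using hk_sum)
  refine (lp.isCompact_setOf_forall_norm_apply_le ENNReal.ofNat_ne_top hk_mem).of_isClosed_subset
    (isClosed_setOf_summable_and_tsum_le (fun j => ?_) (fun j x => by positivity) 1) ?_
  · exact ((lp.lipschitzWith_one_eval 2 j).continuous.norm.pow 2).div_const _
  · rintro x ⟨hsum, hle⟩ j
    have hj : ‖x j‖ ^ 2 / k j ^ 2 ≤ 1 := (hsum.le_tsum j fun i _ => by positivity).trans hle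
    rw [div_le_one (pow_pos (hk j) 2)] at hj
    exact le_of_pow_le_pow_left₀ two_ne_zero (hk j).le hj
end

section
/- Let k : ℕ → ℝ with k(j) > 0 for all j. For each j let μ_j be the measure on ℂ with density s ↦ (π·k(j)²)⁻¹·exp(-|s|²/k(j)²) with respect to Lebesgue measure (each μ_j is a probability measure), and let μ be the infinite product probability measure of the μ_j on ℕ → ℂ. For a multi-index I define the monomial z^I : (ℕ → ℂ) → ℂ by z^I(x) = ∏_{j ∈ supp I} x(j)^(I(j)). Then for all multi-indices I, J: ∫ conj(z^I(x)) · z^J(x) dμ(x) = 0 if I ≠ J, and ∫ |z^I(x)|² dμ(x) = I! · ∏_j k(j)^(2·I(j)). -/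
open MeasureTheory
open scoped Real BigOperators

/-- The factorial `I! = ∏_j (I j)!` of a multi-index. -/
noncomputable def mfact (I : ℕ →₀ ℕ) : ℕ := I.prod fun _ n => n.factorial

/-- The monomial `z^I(x) = ∏_{j ∈ supp I} x(j)^(I j)` on `ℕ → ℂ`. -/
noncomputable def zmon (I : ℕ →₀ ℕ) (x : ℕ → ℂ) : ℂ := ∏ j ∈ I.support, x j ^ I j

/-!
A rotation `s ↦ a s` with `‖a‖ = 1` preserves every radial density on `ℂ` and multiplies
`conj s ^ m * s ^ n` by `a ^ (n - m)`; taking `a ^ (n - m) = -1` shows that all mixed moments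
of a one-dimensional Gaussian vanish, while the diagonal moment `∫ ‖s‖ ^ (2 n)` is a Gamma
integral equal to `n! σ ^ (2 n)`. The function `conj (z^I) * z^J` only depends on the coordinates
in `supp I ∪ supp J`, so under the projective limit its integral is the finite product of these
one-dimensional moments.
-/

open scoped Nat

noncomputable def complexGaussian (σ : ℝ) : Measure ℂ :=
  volume.withDensity fun s => ENNReal.ofReal ((π * σ ^ 2)⁻¹ * Real.exp (-(‖s‖ ^ 2) / σ ^ 2))

lemma integral_complexGaussian {E : Type*} [NormedAddCommGroup E] [NormedSpace ℝ E] (σ : ℝ)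
    (f : ℂ → E) :
    ∫ s, f s ∂complexGaussian σ = ∫ s, ((π * σ ^ 2)⁻¹ * Real.exp (-(‖s‖ ^ 2) / σ ^ 2)) • f s := by
  rw [complexGaussian, integral_withDensity_eq_integral_toReal_smul (by fun_prop)
    (.of_forall fun _ => ENNReal.ofReal_lt_top)]
  simp_rw [ENNReal.toReal_ofReal (by positivity : 0 ≤ (π * σ ^ 2)⁻¹ * Real.exp _)]

lemma Complex.integral_norm_pow_mul_exp_neg_mul_sq {b : ℝ} (hb : 0 < b) (n : ℕ) :
    ∫ x : ℂ, ‖x‖ ^ (2 * n) * Real.exp (-b * ‖x‖ ^ 2) = π * n ! / b ^ (n + 1) := by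
  have h := Complex.integral_rpow_mul_exp_neg_mul_rpow (p := 2) (q := (2 * n : ℕ)) one_le_two
    (by linarith [(Nat.cast_nonneg (2 * n) : (0 : ℝ) ≤ _)]) hb
  simp only [Real.rpow_natCast, Real.rpow_two] at h
  rw [h, show ((2 * n : ℕ) + 2 : ℝ) / 2 = (n : ℝ) + 1 by push_cast; ring,
    show -((2 * n : ℕ) + 2 : ℝ) / 2 = -((n + 1 : ℕ) : ℝ) by push_cast; ring,
    Real.Gamma_nat_eq_factorial, Real.rpow_neg hb.le, Real.rpow_natCast]
  field_simp

lemma integral_norm_pow_complexGaussian {σ : ℝ} (hσ : σ ≠ 0) (n : ℕ) :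
    ∫ s, ‖s‖ ^ (2 * n) ∂complexGaussian σ = n ! * σ ^ (2 * n) := by
  have hσ2 : 0 < σ ^ 2 := by positivity
  have hexp : ∀ s : ℂ, Real.exp (-(‖s‖ ^ 2) / σ ^ 2) = Real.exp (-(σ ^ 2)⁻¹ * ‖s‖ ^ 2) :=
    fun s => by rw [neg_div, div_eq_inv_mul, neg_mul]
  simp_rw [integral_complexGaussian, smul_eq_mul, hexp, mul_assoc, integral_const_mul,
    mul_comm (Real.exp _), Complex.integral_norm_pow_mul_exp_neg_mul_sq (inv_pos.mpr hσ2),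
    pow_mul, inv_pow, div_inv_eq_mul, pow_succ]
  field_simp

lemma measurePreserving_circle_mul_withDensity_radial (g : ℝ → ENNReal) (a : Circle) :
    MeasurePreserving (fun s : ℂ => (a : ℂ) * s) (volume.withDensity fun s => g ‖s‖)
      (volume.withDensity fun s => g ‖s‖) := by
  have hrot : MeasurePreserving (fun s : ℂ => (a : ℂ) * s) := (rotation a).measurePreserving
  refine ⟨hrot.measurable, Measure.ext fun A hA => ?_⟩
  rw [Measure.map_apply hrot.measurable hA, withDensity_apply _ (hrot.measurable hA),
    withDensity_apply _ hA,
    ← hrot.setLIntegral_comp_preimage_emb (rotation a).toHomeomorph.measurableEmbedding _ A]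
  simp [Circle.norm_coe]

lemma measurePreserving_circle_mul_complexGaussian (σ : ℝ) (a : Circle) :
    MeasurePreserving (fun s : ℂ => (a : ℂ) * s) (complexGaussian σ) (complexGaussian σ) :=
  measurePreserving_circle_mul_withDensity_radial
    (fun r => ENNReal.ofReal ((π * σ ^ 2)⁻¹ * Real.exp (-(r ^ 2) / σ ^ 2))) a

lemma integral_conj_pow_mul_pow_eq_zero_of_circle_invariant {ν : Measure ℂ}
    (hν : ∀ a : Circle, MeasurePreserving (fun s : ℂ => (a : ℂ) * s) ν ν) {m n : ℕ}
    (hmn : m ≠ n) : ∫ s, (starRingEnd ℂ) s ^ m * s ^ n ∂ν = 0 := by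
  set a := Circle.exp (π / ((n : ℝ) - m))
  have hd : ((n : ℂ) - m) ≠ 0 := sub_ne_zero.mpr (Nat.cast_injective.ne hmn.symm)
  have ha : (starRingEnd ℂ) a ^ m * (a : ℂ) ^ n = -1 := by
    rw [Circle.coe_exp, ← Complex.exp_conj, ← Complex.exp_nat_mul, ← Complex.exp_nat_mul,
      ← Complex.exp_add, map_mul, Complex.conj_ofReal, Complex.conj_I]
    convert Complex.exp_pi_mul_I using 2
    push_cast
    field_simp
    ring
  have hrot := (hν a).integral_comp (rotation a).toHomeomorph.measurableEmbedding
    (fun s => (starRingEnd ℂ) s ^ m * s ^ n)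
  have hfactor : ∀ s : ℂ, (starRingEnd ℂ) (a * s) ^ m * (a * s) ^ n
      = -((starRingEnd ℂ) s ^ m * s ^ n) := fun s => by
    rw [map_mul, mul_pow, mul_pow, ← neg_one_mul, ← ha]; ring
  simp only [hfactor, integral_neg] at hrot
  exact CharZero.eq_neg_self_iff.mp hrot.symm

lemma integral_conj_pow_mul_pow_complexGaussian {σ : ℝ} (hσ : σ ≠ 0) (m n : ℕ) :
    ∫ s, (starRingEnd ℂ) s ^ m * s ^ n ∂complexGaussian σ =
      if m = n then ((n ! * σ ^ (2 * n) : ℝ) : ℂ) else 0 := by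
  split_ifs with hmn
  · subst hmn
    simp_rw [← mul_pow, Complex.conj_mul', ← pow_mul]
    exact_mod_cast integral_norm_pow_complexGaussian hσ m
  · exact integral_conj_pow_mul_pow_eq_zero_of_circle_invariant
      (measurePreserving_circle_mul_complexGaussian σ) hmn

lemma MeasureTheory.IsProjectiveLimit.integral_comp_restrict {ι E : Type*} {α : ι → Type*}
    [∀ i, MeasurableSpace (α i)] [NormedAddCommGroup E] [NormedSpace ℝ E]
    {P : ∀ J : Finset ι, Measure (∀ j : J, α j)} {μ : Measure (∀ i, α i)}
    (hμ : IsProjectiveLimit μ P) (J : Finset ι) {f : (∀ j : J, α j) → E}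
    (hf : AEStronglyMeasurable f (P J)) :
    ∫ x, f (J.restrict x) ∂μ = ∫ y, f y ∂(P J) := by
  rw [← hμ J] at hf ⊢
  exact (integral_map J.measurable_restrict.aemeasurable hf).symm

lemma zmon_eq_prod_of_support_subset {I : ℕ →₀ ℕ} {S : Finset ℕ} (hS : I.support ⊆ S)
    (x : ℕ → ℂ) : zmon I x = ∏ j ∈ S, x j ^ I j :=
  Finset.prod_subset hS fun j _ hj => by rw [Finsupp.notMem_support_iff.mp hj, pow_zero]

lemma integral_conj_zmon_mul_zmon {μs : ℕ → Measure ℂ} [∀ j, SigmaFinite (μs j)]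
    {μ : Measure (ℕ → ℂ)}
    (hμ : IsProjectiveLimit μ fun J : Finset ℕ => Measure.pi fun j : J => μs j)
    (I J : ℕ →₀ ℕ) :
    ∫ x, (starRingEnd ℂ) (zmon I x) * zmon J x ∂μ =
      ∏ j ∈ I.support ∪ J.support, ∫ s, (starRingEnd ℂ) s ^ I j * s ^ J j ∂μs j := by
  set S := I.support ∪ J.support
  have hprod : ∀ x, (starRingEnd ℂ) (zmon I x) * zmon J x =
      ∏ j : S, (starRingEnd ℂ) (S.restrict x j) ^ I j * S.restrict x j ^ J j := fun x => by
    rw [zmon_eq_prod_of_support_subset Finset.subset_union_left,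
      zmon_eq_prod_of_support_subset Finset.subset_union_right, map_prod,
      ← Finset.prod_mul_distrib, ← Finset.prod_coe_sort S]
    simp [map_pow]
  simp_rw [hprod]
  rw [hμ.integral_comp_restrict S
      (f := fun y => ∏ j : S, (starRingEnd ℂ) (y j) ^ I j * y j ^ J j) (by fun_prop),
    integral_fintype_prod_eq_prod fun (j : S) s => (starRingEnd ℂ) s ^ I j * s ^ J j,
    Finset.prod_coe_sort S fun j => ∫ s, (starRingEnd ℂ) s ^ I j * s ^ J j ∂μs j]

theorem stmt4_general (k : ℕ → ℝ) (hk : ∀ j, 0 < k j)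
    (μs : ℕ → Measure ℂ)
    (hμs : ∀ j, μs j = volume.withDensity fun s =>
      ENNReal.ofReal ((π * k j ^ 2)⁻¹ * Real.exp (-(‖s‖ ^ 2) / k j ^ 2)))
    [∀ j, IsProbabilityMeasure (μs j)]
    (μ : Measure (ℕ → ℂ))
    (hμ : IsProjectiveLimit μ fun J : Finset ℕ => Measure.pi fun j : J => μs j)
    (I J : ℕ →₀ ℕ) :
    (I ≠ J → ∫ x, (starRingEnd ℂ) (zmon I x) * zmon J x ∂μ = 0) ∧
    ∫ x, ‖zmon I x‖ ^ 2 ∂μ =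
      (mfact I : ℝ) * ∏ j ∈ I.support, k j ^ (2 * I j) := by
  have hmoment : ∀ I J : ℕ →₀ ℕ, ∫ x, (starRingEnd ℂ) (zmon I x) * zmon J x ∂μ =
      ∏ j ∈ I.support ∪ J.support,
        if I j = J j then (((J j) ! * k j ^ (2 * J j) : ℝ) : ℂ) else 0 := fun I J => by
    rw [integral_conj_zmon_mul_zmon hμ]
    refine Finset.prod_congr rfl fun j _ => ?_
    rw [hμs j, ← complexGaussian, integral_conj_pow_mul_pow_complexGaussian (hk j).ne']
  refine ⟨fun hIJ => ?_, ?_⟩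
  · obtain ⟨j, hj⟩ := Finsupp.ne_iff.mp hIJ
    have hjS : j ∈ I.support ∪ J.support := by
      rw [Finset.mem_union, Finsupp.mem_support_iff, Finsupp.mem_support_iff]
      by_contra! h
      exact hj (h.1.trans h.2.symm)
    rw [hmoment, Finset.prod_eq_zero hjS (if_neg hj)]
  · apply Complex.ofReal_injective
    rw [← integral_complex_ofReal]
    simp_rw [Complex.ofReal_pow, ← Complex.conj_mul', hmoment I I]
    simp only [Finset.union_self, ↓reduceIte, mfact, Finsupp.prod]
    push_cast
    exact Finset.prod_mul_distrib

theorem stmt4 (k : ℕ → ℝ) (hk : ∀ j, 0 < k j)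
    (μs : ℕ → Measure ℂ)
    (hμs : ∀ j, μs j = volume.withDensity fun s =>
      ENNReal.ofReal ((π * k j ^ 2)⁻¹ * Real.exp (-(‖s‖ ^ 2) / k j ^ 2)))
    [∀ j, IsProbabilityMeasure (μs j)]
    (μ : Measure (ℕ → ℂ)) [IsProbabilityMeasure μ]
    (hμ : IsProjectiveLimit μ fun J : Finset ℕ => Measure.pi fun j : J => μs j)
    (I J : ℕ →₀ ℕ) :
    (I ≠ J → ∫ x, (starRingEnd ℂ) (zmon I x) * zmon J x ∂μ = 0) ∧
    ∫ x, ‖zmon I x‖ ^ 2 ∂μ =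
      (mfact I : ℝ) * ∏ j ∈ I.support, k j ^ (2 * I j) :=
  stmt4_general k hk μs hμs μ hμ I J
end

section
/- Let x : ℕ → ℂ be such that j ↦ |x(j)| is summable, and let n : ℕ. Then the family, indexed by multi-indices I with |I| = n, given by I ↦ (n!/I!)·∏_j x(j)^(I(j)) is summable, and its sum equals (∑'_j x(j))^n. -/
/-!
Over a finite set `s` of indices, the multinomial theorem expands `(∑ j ∈ s, x j) ^ n` as the sum
of the terms `(n! / I!) x^I` over the multi-indices of degree `n` supported in `s`. Applied to
`‖x‖`, it bounds every finite partial sum of the norms by `(∑' j, ‖x j‖) ^ n`, which gives absolute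
summability; the value is then the limit of `(∑ j ∈ s, x j) ^ n` as `s` grows, since these finite
families of multi-indices exhaust all of them.
-/

open scoped BigOperators

/-- The degree `|I| = ∑_j I j` of a multi-index. -/
noncomputable def mdeg (I : ℕ →₀ ℕ) : ℕ := I.sum fun _ n => n

open Filter Topology Finset Nat

theorem Finset.sum_finsuppAntidiag_eq_sum_piAntidiag {ι μ M : Type*} [DecidableEq ι]
    [AddCommMonoid μ] [HasAntidiagonal μ] [DecidableEq μ] [AddCommMonoid M] (s : Finset ι)
    (n : μ) (g : (ι → μ) → M) :
    ∑ I ∈ s.finsuppAntidiag n, g I = ∑ f ∈ s.piAntidiag n, g f := by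
  rw [finsuppAntidiag, sum_map]
  exact sum_attach (s.piAntidiag n) g

theorem mfact_mul_multinomial (I : ℕ →₀ ℕ) : mfact I * I.multinomial = (mdeg I)! :=
  Nat.multinomial_spec I.support I

theorem mem_finsuppAntidiag_iff_mdeg {s : Finset ℕ} {n : ℕ} {I : ℕ →₀ ℕ} :
    I ∈ s.finsuppAntidiag n ↔ mdeg I = n ∧ I.support ⊆ s :=
  mem_finsuppAntidiag'

theorem factorial_mdeg_div_mfact {K : Type*} [Semifield K] [CharZero K] (I : ℕ →₀ ℕ) :
    ((mdeg I)! : K) / mfact I = I.multinomial := by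
  rw [← mfact_mul_multinomial, Nat.cast_mul, mul_div_cancel_left₀]
  exact_mod_cast (Finset.prod_pos fun i _ => (I i).factorial_pos).ne'

noncomputable def multinomialTerm {K : Type*} [Semifield K] (n : ℕ) (x : ℕ → K)
    (I : ℕ →₀ ℕ) : K :=
  (n ! : K) / mfact I * ∏ j ∈ I.support, x j ^ I j

theorem sum_pow_eq_sum_multinomialTerm {K : Type*} [Semifield K] [CharZero K] (x : ℕ → K)
    (n : ℕ) (s : Finset ℕ) :
    (∑ j ∈ s, x j) ^ n = ∑ I ∈ s.finsuppAntidiag n, multinomialTerm n x I := by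
  rw [sum_pow_eq_sum_piAntidiag, ← sum_finsuppAntidiag_eq_sum_piAntidiag s n
    (fun f => (Nat.multinomial s f : K) * ∏ i ∈ s, x i ^ f i)]
  refine sum_congr rfl fun I hI => ?_
  obtain ⟨hdeg, hsupp⟩ := mem_finsuppAntidiag_iff_mdeg.1 hI
  rw [multinomialTerm, ← hdeg, factorial_mdeg_div_mfact,
    Finsupp.multinomial_of_support_subset hsupp]
  congr 1
  exact (Finsupp.prod_of_support_subset I hsupp (fun j k => x j ^ k) fun _ _ => pow_zero _).symm

theorem norm_multinomialTerm {K : Type*} [RCLike K] (n : ℕ) (x : ℕ → K) (I : ℕ →₀ ℕ) :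
    ‖multinomialTerm n x I‖ = multinomialTerm n (‖x ·‖) I := by
  simp [multinomialTerm]

theorem sum_subtype_finsuppAntidiag {M : Type*} [AddCommMonoid M] (s : Finset ℕ) (n : ℕ)
    (g : (ℕ →₀ ℕ) → M) :
    ∑ I ∈ (s.finsuppAntidiag n).subtype (mdeg · = n), g I.1 = ∑ I ∈ s.finsuppAntidiag n, g I :=
  sum_subtype_of_mem g fun _ hI => (mem_finsuppAntidiag_iff_mdeg.1 hI).1

theorem tendsto_subtype_finsuppAntidiag (n : ℕ) :
    Tendsto (fun s : Finset ℕ => (s.finsuppAntidiag n).subtype (mdeg · = n)) atTop atTop := by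
  refine tendsto_atTop_finset_of_monotone (fun s t hst I hI => ?_) fun I => ⟨I.1.support, ?_⟩
  · simp only [mem_subtype, mem_finsuppAntidiag_iff_mdeg] at hI ⊢
    exact ⟨hI.1, hI.2.trans hst⟩
  · simp only [mem_subtype, mem_finsuppAntidiag_iff_mdeg]
    exact ⟨I.2, subset_rfl⟩

theorem summable_of_sum_le_of_tendsto {α β : Type*} {l : Filter α} [l.NeBot] {f : β → ℝ}
    (hf : 0 ≤ f) {T : α → Finset β} (hT : Tendsto T l atTop) {c : ℝ}
    (h : ∀ a, ∑ b ∈ T a, f b ≤ c) : Summable f := by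
  refine summable_of_sum_le (c := c) hf fun A => ?_
  obtain ⟨a, ha⟩ := (hT.eventually (eventually_ge_atTop A)).exists
  exact (sum_le_sum_of_subset_of_nonneg ha fun b _ _ => hf b).trans (h a)

theorem Summable.hasSum_of_tendsto_sum {α β E : Type*} [AddCommMonoid E] [TopologicalSpace E]
    [T2Space E] {l : Filter α} [l.NeBot] {f : β → E} (hf : Summable f) {T : α → Finset β}
    (hT : Tendsto T l atTop) {a : E} (h : Tendsto (fun s => ∑ b ∈ T s, f b) l (𝓝 a)) :
    HasSum f a :=
  tendsto_nhds_unique (hf.hasSum.comp hT) h ▸ hf.hasSum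

theorem stmt5 (x : ℕ → ℂ) (hx : Summable fun j => ‖x j‖) (n : ℕ) :
    (Summable fun I : {I : ℕ →₀ ℕ // mdeg I = n} =>
      ((Nat.factorial n : ℂ) / (mfact I.1 : ℂ)) * ∏ j ∈ I.1.support, x j ^ I.1 j) ∧
    ∑' I : {I : ℕ →₀ ℕ // mdeg I = n},
        ((Nat.factorial n : ℂ) / (mfact I.1 : ℂ)) * ∏ j ∈ I.1.support, x j ^ I.1 j =
      (∑' j, x j) ^ n := by
  change Summable (fun I : {I // mdeg I = n} => multinomialTerm n x I.1) ∧
    ∑' I : {I // mdeg I = n}, multinomialTerm n x I.1 = (∑' j, x j) ^ n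
  have hT := tendsto_subtype_finsuppAntidiag n
  have hsum : Summable fun I : {I // mdeg I = n} => multinomialTerm n x I.1 := by
    refine .of_norm <| summable_of_sum_le_of_tendsto (c := (∑' j, ‖x j‖) ^ n)
      (fun _ => norm_nonneg _) hT fun s => ?_
    simp only [norm_multinomialTerm]
    rw [sum_subtype_finsuppAntidiag s n, ← sum_pow_eq_sum_multinomialTerm]
    exact pow_le_pow_left₀ (sum_nonneg fun _ _ => norm_nonneg _)
      (hx.sum_le_tsum s fun _ _ => norm_nonneg _) n
  have hlim : Tendsto (fun s : Finset ℕ => (∑ j ∈ s, x j) ^ n) atTop (𝓝 ((∑' j, x j) ^ n)) :=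
    hx.of_norm.hasSum.pow n
  refine ⟨hsum, (hsum.hasSum_of_tendsto_sum hT ?_).tsum_eq⟩
  simpa only [sum_subtype_finsuppAntidiag, ← sum_pow_eq_sum_multinomialTerm] using hlim
end

section
/- Let λ : ℕ → ℝ be summable with λ(n) ≥ 0 for all n, let m : ℕ, let u : Fin m → ℓ² with ‖u(i)‖ ≤ 1 for all i, and let c : Fin m → ℂ. Then the number ∑_{i, l} conj(c(i))·c(l)·(∑'_n λ(n)·(⟪u(i), u(l)⟫)^n) is a nonnegative real number (its imaginary part is 0 and its real part is ≥ 0), where ⟪·,·⟫ is the ℓ² inner product. -/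
/-!
The kernel `Λ(⟪ξ, η⟫)` is a limit of nonnegative combinations of the Hadamard powers of the Gram
matrix `(⟪u i, u l⟫)`. Each Hadamard power is positive semidefinite by the Schur product theorem,
positive semidefinite matrices form a closed convex cone, and the bound `‖u i‖ ≤ 1` makes the
entrywise power series converge.
-/

open scoped BigOperators ComplexInnerProductSpace ComplexOrder Matrix

namespace Matrix

variable {ι 𝕜 : Type*} [Fintype ι] [RCLike 𝕜]

theorem PosSemidef.map_pow {A : Matrix ι ι 𝕜} (hA : A.PosSemidef) (n : ℕ) :
    (A.map (· ^ n)).PosSemidef := by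
  induction n with
  | zero =>
    have hones : A.map (· ^ 0) = gram 𝕜 fun _ : ι => (1 : 𝕜) := by ext; simp [gram_apply]
    exact hones ▸ posSemidef_gram 𝕜 _
  | succ n ih =>
    have hsucc : A.map (· ^ (n + 1)) = A.map (· ^ n) ⊙ A := by
      ext; simp [hadamard_apply, pow_succ]
    exact hsucc ▸ ih.hadamard hA

theorem PosSemidef.tsum {β : Type*} {f : β → Matrix ι ι 𝕜} (hf : ∀ b, (f b).PosSemidef)
    (hs : Summable f) : (∑' b, f b).PosSemidef := by
  refine posSemidef_iff_dotProduct_mulVec.mpr ⟨?_, fun x => ?_⟩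
  · rw [IsHermitian, conjTranspose_tsum]
    exact tsum_congr fun b => (hf b).isHermitian.eq
  · let q : Matrix ι ι 𝕜 →+ 𝕜 :=
      AddMonoidHom.mk' (fun M => star x ⬝ᵥ (M *ᵥ x)) fun M N => by
        rw [add_mulVec, dotProduct_add]
    have hq : Continuous q :=
      continuous_const.dotProduct (continuous_id.matrix_mulVec continuous_const)
    exact (hs.hasSum.map q hq).nonneg fun b => (posSemidef_iff_dotProduct_mulVec.mp (hf b)).2 x

theorem PosSemidef.map_tsum_mul_pow {A : Matrix ι ι 𝕜} (hA : A.PosSemidef) {a : ℕ → 𝕜}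
    (ha : ∀ n, 0 ≤ a n) (hs : ∀ i j, Summable fun n => a n * A i j ^ n) :
    (A.map fun z => ∑' n, a n * z ^ n).PosSemidef := by
  have hsum : HasSum (fun n => a n • A.map (· ^ n)) (A.map fun z => ∑' n, a n * z ^ n) :=
    Pi.hasSum.mpr fun i => Pi.hasSum.mpr fun j => (hs i j).hasSum
  exact hsum.tsum_eq ▸ PosSemidef.tsum (fun n => (hA.map_pow n).smul (ha n)) hsum.summable

end Matrix

open Matrix

theorem summable_mul_pow_of_norm_le_one {R : Type*} [NormedRing R] [NormOneClass R]
    [CompleteSpace R] {a : ℕ → R} (ha : Summable fun n => ‖a n‖) {z : R} (hz : ‖z‖ ≤ 1) :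
    Summable fun n => a n * z ^ n :=
  Summable.of_norm_bounded ha fun n =>
    (norm_mul_le _ _).trans <| mul_le_of_le_one_right (norm_nonneg _) <|
      (norm_pow_le _ n).trans (pow_le_one₀ (norm_nonneg _) hz)

theorem stmt7 (lam : ℕ → ℝ) (hlam_sum : Summable lam) (hlam_nonneg : ∀ n, 0 ≤ lam n)
    (m : ℕ) (u : Fin m → lp (fun _ : ℕ => ℂ) 2) (hu : ∀ i, ‖u i‖ ≤ 1)
    (c : Fin m → ℂ) :
    (∑ i : Fin m, ∑ l : Fin m,
        (starRingEnd ℂ) (c i) * c l * ∑' n : ℕ, (lam n : ℂ) * (⟪u i, u l⟫ : ℂ) ^ n).im = 0 ∧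
    0 ≤ (∑ i : Fin m, ∑ l : Fin m,
        (starRingEnd ℂ) (c i) * c l * ∑' n : ℕ, (lam n : ℂ) * (⟪u i, u l⟫ : ℂ) ^ n).re := by
  have hlam_norm : Summable fun n => ‖(lam n : ℂ)‖ := by
    simpa only [Complex.norm_real, Real.norm_eq_abs] using hlam_sum.abs
  have hinner_le (i l : Fin m) : ‖⟪u i, u l⟫‖ ≤ 1 :=
    (norm_inner_le_norm _ _).trans (mul_le_one₀ (hu i) (norm_nonneg _) (hu l))
  have hK := (posSemidef_gram ℂ u).map_tsum_mul_pow
    (fun n => Complex.zero_le_real.mpr (hlam_nonneg n))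
    fun i l => summable_mul_pow_of_norm_le_one hlam_norm (hinner_le i l)
  have hquad := (posSemidef_iff_dotProduct_mulVec.mp hK).2 c
  have hform : star c ⬝ᵥ ((gram ℂ u).map (fun z => ∑' n, (lam n : ℂ) * z ^ n) *ᵥ c) =
      ∑ i, ∑ l, (starRingEnd ℂ) (c i) * c l * ∑' n, (lam n : ℂ) * ⟪u i, u l⟫ ^ n := by
    simp only [dotProduct, mulVec, Finset.mul_sum, map_apply, gram_apply]
    exact Finset.sum_congr rfl fun i _ => Finset.sum_congr rfl fun l _ => by
      simp only [Pi.star_apply, Complex.star_def]; ring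
  rw [hform, Complex.nonneg_iff] at hquad
  exact ⟨hquad.2.symm, hquad.1⟩
end

section
/- For every τ > 0 and every p with 0 < p < 1 there exists a constant C > 0 such that for all n : ℕ, ∑_{m=0}^{n} exp(-τ·(m:ℝ)^p)·exp(-τ·((n-m):ℝ)^p) ≤ C·exp(-τ·(n:ℝ)^p). -/
/-!
Since `t ↦ t ^ p` is concave, its increments decrease, which gives
`a ^ p + b ^ p ≥ (a + b) ^ p + (2 - 2 ^ p) * min a b ^ p`. Hence every term of the convolution
is at most `exp (-τ n ^ p) * (exp (-c m ^ p) + exp (-c (n - m) ^ p))` with `c = τ (2 - 2 ^ p) > 0`,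
and `C = 2 ∑ₖ exp (-c k ^ p)` works.
-/

open Real Filter Asymptotics Finset

theorem ConcaveOn.map_add_sub_map_le_of_le {𝕜 : Type*} [Field 𝕜] [LinearOrder 𝕜]
    [IsStrictOrderedRing 𝕜] {s : Set 𝕜} {f : 𝕜 → 𝕜} (hf : ConcaveOn 𝕜 s f) {x y d : 𝕜}
    (hx : x ∈ s) (hyd : y + d ∈ s) (hxy : x ≤ y) (hd : 0 ≤ d) :
    f (y + d) - f y ≤ f (x + d) - f x := by
  rcases (add_nonneg (sub_nonneg.2 hxy) hd).eq_or_lt with hL | hL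
  · obtain rfl : y = x := by linarith
    obtain rfl : d = 0 := by linarith
    simp
  -- `x + d` and `y` are convex combinations of `x` and `y + d` with swapped weights.
  have hw : (y - x) / (y - x + d) + d / (y - x + d) = 1 := by
    rw [← add_div, div_self hL.ne']
  have h₁ := hf.2 hx hyd (div_nonneg (sub_nonneg.2 hxy) hL.le) (div_nonneg hd hL.le) hw
  have h₂ := hf.2 hx hyd (div_nonneg hd hL.le) (div_nonneg (sub_nonneg.2 hxy) hL.le)
    (by rwa [add_comm])
  have e₁ : ((y - x) / (y - x + d)) • x + (d / (y - x + d)) • (y + d) = x + d := by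
    simp only [smul_eq_mul]; field_simp; ring
  have e₂ : (d / (y - x + d)) • x + ((y - x) / (y - x + d)) • (y + d) = y := by
    simp only [smul_eq_mul]; field_simp; ring
  rw [e₁] at h₁
  rw [e₂] at h₂
  simp only [smul_eq_mul] at h₁ h₂
  linear_combination h₁ + h₂ - (f x + f (y + d)) * hw

theorem Real.rpow_add_add_sub_two_rpow_mul_rpow_le {p x y : ℝ} (hp0 : 0 ≤ p) (hp1 : p ≤ 1)
    (hx : 0 ≤ x) (hxy : x ≤ y) :
    (x + y) ^ p + (2 - 2 ^ p) * x ^ p ≤ x ^ p + y ^ p := by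
  have h := (concaveOn_rpow hp0 hp1).map_add_sub_map_le_of_le hx
    (show y + x ∈ Set.Ici 0 by simp only [Set.mem_Ici]; linarith) hxy hx
  rw [← two_mul, mul_rpow zero_le_two hx, add_comm y x] at h
  linarith

theorem Real.exp_neg_mul_rpow_mul_exp_neg_mul_rpow_le {τ p x y : ℝ} (hτ : 0 ≤ τ) (hp0 : 0 ≤ p)
    (hp1 : p ≤ 1) (hx : 0 ≤ x) (hy : 0 ≤ y) :
    exp (-τ * x ^ p) * exp (-τ * y ^ p) ≤
      exp (-τ * (x + y) ^ p) *
        (exp (-(τ * (2 - 2 ^ p)) * x ^ p) + exp (-(τ * (2 - 2 ^ p)) * y ^ p)) := by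
  wlog hxy : x ≤ y generalizing x y
  · rw [mul_comm, add_comm x, add_comm (exp _)]
    exact this hy hx (le_of_not_ge hxy)
  have key := mul_le_mul_of_nonneg_left (rpow_add_add_sub_two_rpow_mul_rpow_le hp0 hp1 hx hxy) hτ
  calc exp (-τ * x ^ p) * exp (-τ * y ^ p)
      ≤ exp (-τ * (x + y) ^ p) * exp (-(τ * (2 - 2 ^ p)) * x ^ p) := by
        rw [← exp_add, ← exp_add, exp_le_exp]
        linarith
    _ ≤ _ := by gcongr; linarith [exp_pos (-(τ * (2 - 2 ^ p)) * y ^ p)]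

theorem Real.summable_exp_neg_mul_natCast_rpow {c p : ℝ} (hc : 0 < c) (hp : 0 < p) :
    Summable fun k : ℕ => exp (-c * (k : ℝ) ^ p) := by
  have h : (fun k : ℕ => exp (-c * (k : ℝ) ^ p)) =o[atTop] fun k : ℕ => ((k : ℝ) ^ p) ^ (-2 / p) :=
    (isLittleO_exp_neg_mul_rpow_atTop hc _).comp_tendsto
      ((tendsto_rpow_atTop hp).comp tendsto_natCast_atTop_atTop)
  refine summable_of_isBigO_nat (summable_nat_rpow.2 (by norm_num : (-2 : ℝ) < -1))
    (h.isBigO.congr_right fun k => ?_)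
  rw [← rpow_mul k.cast_nonneg, mul_div_cancel₀ _ hp.ne']

theorem Finset.Nat.sum_antidiagonal_add_le_two_mul_tsum {f : ℕ → ℝ} (hf : Summable f)
    (hf0 : ∀ k, 0 ≤ f k) (n : ℕ) :
    ∑ ij ∈ antidiagonal n, (f ij.1 + f ij.2) ≤ 2 * ∑' k, f k := by
  have hswap : ∑ ij ∈ antidiagonal n, f ij.2 = ∑ ij ∈ antidiagonal n, f ij.1 :=
    sum_antidiagonal_swap (f := fun ij => f ij.1)
  have hle : ∑ ij ∈ antidiagonal n, f ij.1 ≤ ∑' k, f k := by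
    rw [sum_antidiagonal_eq_sum_range_succ_mk]
    exact hf.sum_le_tsum _ fun k _ => hf0 k
  rw [sum_add_distrib, hswap]
  linarith

theorem Finset.Nat.sum_antidiagonal_exp_neg_mul_rpow_mul_le {τ p : ℝ} (hτ : 0 ≤ τ)
    (hp0 : 0 ≤ p) (hp1 : p ≤ 1)
    (hS : Summable fun k : ℕ => exp (-(τ * (2 - 2 ^ p)) * (k : ℝ) ^ p)) (n : ℕ) :
    ∑ ij ∈ antidiagonal n, exp (-τ * (ij.1 : ℝ) ^ p) * exp (-τ * (ij.2 : ℝ) ^ p) ≤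
      (2 * ∑' k : ℕ, exp (-(τ * (2 - 2 ^ p)) * (k : ℝ) ^ p)) * exp (-τ * (n : ℝ) ^ p) := by
  calc ∑ ij ∈ antidiagonal n, exp (-τ * (ij.1 : ℝ) ^ p) * exp (-τ * (ij.2 : ℝ) ^ p)
      ≤ ∑ ij ∈ antidiagonal n, exp (-τ * (n : ℝ) ^ p) *
          (exp (-(τ * (2 - 2 ^ p)) * (ij.1 : ℝ) ^ p) +
            exp (-(τ * (2 - 2 ^ p)) * (ij.2 : ℝ) ^ p)) := by
        refine sum_le_sum fun ij hij => ?_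
        rw [← mem_antidiagonal.1 hij, Nat.cast_add]
        exact exp_neg_mul_rpow_mul_exp_neg_mul_rpow_le hτ hp0 hp1 ij.1.cast_nonneg ij.2.cast_nonneg
    _ ≤ exp (-τ * (n : ℝ) ^ p) * (2 * ∑' k : ℕ, exp (-(τ * (2 - 2 ^ p)) * (k : ℝ) ^ p)) := by
        rw [← mul_sum]
        exact mul_le_mul_of_nonneg_left
          (sum_antidiagonal_add_le_two_mul_tsum hS (fun _ => (exp_pos _).le) n) (exp_pos _).le
    _ = _ := mul_comm _ _

theorem stmt8 (τ p : ℝ) (hτ : 0 < τ) (hp0 : 0 < p) (hp1 : p < 1) :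
    ∃ C : ℝ, 0 < C ∧ ∀ n : ℕ,
      ∑ m ∈ Finset.range (n + 1),
          Real.exp (-τ * (m : ℝ) ^ p) * Real.exp (-τ * ((n - m : ℕ) : ℝ) ^ p) ≤
        C * Real.exp (-τ * (n : ℝ) ^ p) := by
  have hc : 0 < τ * (2 - 2 ^ p) := mul_pos hτ (sub_pos.2 (rpow_lt_self_of_one_lt one_lt_two hp1))
  have hS := summable_exp_neg_mul_natCast_rpow hc hp0
  refine ⟨_, mul_pos two_pos (hS.tsum_pos (fun _ => (exp_pos _).le) 0 (exp_pos _)), fun n => ?_⟩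
  rw [← Nat.sum_antidiagonal_eq_sum_range_succ
    (fun i j => exp (-τ * (i : ℝ) ^ p) * exp (-τ * (j : ℝ) ^ p))]
  exact Nat.sum_antidiagonal_exp_neg_mul_rpow_mul_le hτ.le hp0.le hp1.le hS n
end

section
/- Let λ : ℕ → ℝ be summable with λ(n) > 0 for all n, and suppose there is C > 0 with ∑_{m=0}^{n} λ(m)·λ(n-m) ≤ C·λ(n) for all n (λ is subconvolutive). Let k : ℕ → ℝ with k(j) > 0, and set ν(I) = (I!/|I|!)·λ(|I|)⁻¹·∏_j k(j)^(2·I(j)) for each multi-index I. Then there exists a constant C' > 0 such that: for all a, b : (ℕ →₀ ℕ) → ℂ with A := ∑'_I |a(I)|²·ν(I) < ∞ and B := ∑'_I |b(I)|²·ν(I) < ∞, the coefficients c(I) = ∑_{J ≤ I} a(J)·b(I - J) (a finite sum over the multi-indices J with J(j) ≤ I(j) for all j) satisfy ∑'_I |c(I)|²·ν(I) ≤ C'·A·B. -/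
open scoped BigOperators

/-- The weight `ν(I) = (I!/|I|!)·λ(|I|)⁻¹·∏_j k(j)^(2·I(j))`. -/
noncomputable def nuwt (lam : ℕ → ℝ) (k : ℕ → ℝ) (I : ℕ →₀ ℕ) : ℝ :=
  ((mfact I : ℝ) / (Nat.factorial (mdeg I) : ℝ)) * (lam (mdeg I))⁻¹ *
    ∏ j ∈ I.support, k j ^ (2 * I j)

/-
Cauchy–Schwarz with the weights `w(I, J) = ν(I) / (ν(J) ν(I - J))` gives
`|c(I)|² ν(I) ≤ (∑_{J ≤ I} w(I, J)) · ∑_{J ≤ I} |a(J)|² ν(J) · |b(I - J)|² ν(I - J)`,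
and summed over `I` the second factor is `A · B` by the Cauchy product formula.
Since `ν(I) = λ(|I|)⁻¹ k^{2I} / multinomial(I)`, the weight is
`w(I, J) = binom(I, J) / binom(|I|, |J|) · λ(|J|) λ(|I| - |J|) / λ(|I|)`.
Grouping the `J` by `|J| = m` and using the multivariate Vandermonde identity
`∑_{J ≤ I, |J| = m} binom(I, J) = binom(|I|, m)`, read off from the coefficients of
`(1 + X)^|I| = ∏_j (1 + X)^(I j)`, the weights sum to `∑_m λ(m) λ(|I| - m) / λ(|I|) ≤ C`.
So `C' = C` works.
-/

open Finset

theorem norm_sum_Iic_mul_sq_mul_le {A R : Type*} [Preorder A] [LocallyFiniteOrderBot A] [Sub A]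
    [SeminormedRing R] {ν : A → ℝ} (hν : ∀ I, 0 < ν I) (a b : A → R) (I : A) :
    ‖∑ J ∈ Iic I, a J * b (I - J)‖ ^ 2 * ν I ≤ (∑ J ∈ Iic I, ν I / (ν J * ν (I - J))) *
      ∑ J ∈ Iic I, ‖a J‖ ^ 2 * ν J * (‖b (I - J)‖ ^ 2 * ν (I - J)) := by
  have hw : ∀ J ∈ Iic I, 0 < ν I / (ν J * ν (I - J)) := fun J _ =>
    div_pos (hν I) (mul_pos (hν J) (hν (I - J)))
  have hwsum : 0 < ∑ J ∈ Iic I, ν I / (ν J * ν (I - J)) := sum_pos hw ⟨I, mem_Iic.2 le_rfl⟩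
  have htriangle : ‖∑ J ∈ Iic I, a J * b (I - J)‖ ≤ ∑ J ∈ Iic I, ‖a J‖ * ‖b (I - J)‖ :=
    (norm_sum_le _ _).trans (sum_le_sum fun _ _ => norm_mul_le _ _)
  have htitu := sq_sum_div_le_sum_sq_div (Iic I) (fun J => ‖a J‖ * ‖b (I - J)‖) hw
  rw [div_le_iff₀' hwsum] at htitu
  have hνI := hν I
  calc ‖∑ J ∈ Iic I, a J * b (I - J)‖ ^ 2 * ν I
      ≤ (∑ J ∈ Iic I, ‖a J‖ * ‖b (I - J)‖) ^ 2 * ν I := by gcongr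
    _ ≤ (∑ J ∈ Iic I, ν I / (ν J * ν (I - J))) *
          (∑ J ∈ Iic I, (‖a J‖ * ‖b (I - J)‖) ^ 2 / (ν I / (ν J * ν (I - J)))) * ν I := by
        gcongr
    _ = _ := by
        rw [mul_assoc, sum_mul _ _ (ν I)]
        congr 1
        refine sum_congr rfl fun J _ => ?_
        have hνJ := hν J
        have hνIJ := hν (I - J)
        field_simp

section CauchyProduct

variable {A : Type*} [AddCommMonoid A] [PartialOrder A] [CanonicallyOrderedAdd A] [Sub A]
  [OrderedSub A] [AddLeftReflectLE A] [LocallyFiniteOrderBot A] [HasAntidiagonal A]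

theorem sum_antidiagonal_eq_sum_Iic {M : Type*} [AddCommMonoid M] (f : A → A → M)
    (n : A) : ∑ p ∈ antidiagonal n, f p.1 p.2 = ∑ m ∈ Iic n, f m (n - m) := by
  refine sum_nbij' Prod.fst (fun m => (m, n - m)) ?_ ?_ ?_ (fun _ _ => rfl) ?_
  · intro p hp
    rw [HasAntidiagonal.mem_antidiagonal] at hp
    exact mem_Iic.2 (hp ▸ le_self_add)
  · intro m hm
    rw [HasAntidiagonal.mem_antidiagonal]
    exact add_tsub_cancel_of_le (mem_Iic.1 hm)
  · intro p hp
    rw [HasAntidiagonal.mem_antidiagonal] at hp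
    rw [← hp, add_tsub_cancel_left]
  · intro p hp
    rw [HasAntidiagonal.mem_antidiagonal] at hp
    rw [← hp, add_tsub_cancel_left]

theorem hasSum_sum_Iic_mul_of_nonneg {f g : A → ℝ} (hf₀ : ∀ n, 0 ≤ f n)
    (hg₀ : ∀ n, 0 ≤ g n) (hf : Summable f) (hg : Summable g) :
    HasSum (fun n => ∑ m ∈ Iic n, f m * g (n - m)) ((∑' n, f n) * ∑' n, g n) := by
  have hfg : Summable fun p : A × A => f p.1 * g p.2 := hf.mul_of_nonneg hg hf₀ hg₀
  simp_rw [← sum_antidiagonal_eq_sum_Iic fun m m' => f m * g m']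
  rw [hf.tsum_mul_tsum_eq_tsum_sum_antidiagonal hg hfg]
  exact (summable_sum_mul_antidiagonal_of_summable_mul hfg).hasSum

end CauchyProduct

lemma mdeg_add (I J : ℕ →₀ ℕ) : mdeg (I + J) = mdeg I + mdeg J := map_add Finsupp.degree I J

lemma mdeg_mono : Monotone mdeg := Finsupp.degree_mono

lemma mdeg_tsub {I J : ℕ →₀ ℕ} (h : J ≤ I) : mdeg (I - J) = mdeg I - mdeg J := by
  rw [eq_tsub_iff_add_eq_of_le (mdeg_mono h), ← mdeg_add, tsub_add_cancel_of_le h]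

lemma mdeg_eq_sum_of_support_subset {I : ℕ →₀ ℕ} {s : Finset ℕ} (h : I.support ⊆ s) :
    mdeg I = ∑ j ∈ s, I j :=
  Finsupp.sum_of_support_subset I h _ fun _ _ => rfl

noncomputable def mchoose (I J : ℕ →₀ ℕ) : ℕ := ∏ j ∈ I.support, (I j).choose (J j)

theorem sum_mchoose_filter_mdeg (I : ℕ →₀ ℕ) (m : ℕ) :
    ∑ J ∈ Iic I with mdeg J = m, mchoose I J = (mdeg I).choose m := by
  have hpow : ((1 + Polynomial.X : Polynomial ℕ) : PowerSeries ℕ) ^ mdeg I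
      = ∏ j ∈ I.support, ((1 + Polynomial.X : Polynomial ℕ) : PowerSeries ℕ) ^ I j :=
    (prod_pow_eq_pow_sum _ _ _).symm
  have hcoeff : ∀ n i,
      PowerSeries.coeff i (((1 + Polynomial.X : Polynomial ℕ) : PowerSeries ℕ) ^ n) = n.choose i := by
    intro n i
    rw [← Polynomial.coe_pow, Polynomial.coeff_coe, Polynomial.coeff_one_add_X_pow]
    rfl
  have hcoeff_m := congrArg (PowerSeries.coeff m) hpow
  rw [hcoeff, PowerSeries.coeff_prod] at hcoeff_m
  simp only [hcoeff] at hcoeff_m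
  rw [hcoeff_m]
  apply sum_subset
  · intro J hJ
    rw [mem_filter, mem_Iic] at hJ
    have hsupp := Finsupp.support_mono hJ.1
    rw [mem_finsuppAntidiag, ← mdeg_eq_sum_of_support_subset hsupp]
    exact ⟨hJ.2, hsupp⟩
  · intro J hJ hJI
    rw [mem_finsuppAntidiag, ← mdeg_eq_sum_of_support_subset hJ.2] at hJ
    have hnle : ¬ J ≤ I := fun h => hJI (mem_filter.2 ⟨mem_Iic.2 h, hJ.1⟩)
    obtain ⟨j, hjJ, hj⟩ : ∃ j ∈ J.support, I j < J j := by simpa [Finsupp.le_iff] using hnle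
    exact prod_eq_zero (hJ.2 hjJ) (Nat.choose_eq_zero_of_lt hj)

theorem sum_Iic_mchoose_mul {R : Type*} [CommSemiring R] (I : ℕ →₀ ℕ) (g : ℕ → R) :
    ∑ J ∈ Iic I, (mchoose I J : R) * g (mdeg J)
      = ∑ m ∈ range (mdeg I + 1), ((mdeg I).choose m : R) * g m := by
  have hmaps : ∀ J ∈ Iic I, mdeg J ∈ range (mdeg I + 1) := fun J hJ =>
    mem_range_succ_iff.2 (mdeg_mono (mem_Iic.1 hJ))
  rw [← sum_fiberwise_of_maps_to hmaps]
  refine sum_congr rfl fun m _ => ?_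
  rw [← sum_mchoose_filter_mdeg I m, Nat.cast_sum, sum_mul]
  exact sum_congr rfl fun J hJ => by rw [(mem_filter.1 hJ).2]

theorem mfact_eq_mchoose_mul {I J : ℕ →₀ ℕ} (h : J ≤ I) :
    mfact I = mchoose I J * (mfact J * mfact (I - J)) := by
  have hJ : J.support ⊆ I.support := Finsupp.support_mono h
  have hIJ : (I - J).support ⊆ I.support := Finsupp.support_mono tsub_le_self
  rw [mfact, mfact, mfact, Finsupp.prod_of_support_subset J hJ _ (by simp),
    Finsupp.prod_of_support_subset (I - J) hIJ _ (by simp), mchoose, Finsupp.prod,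
    ← prod_mul_distrib, ← prod_mul_distrib]
  refine prod_congr rfl fun j _ => ?_
  rw [Finsupp.tsub_apply, ← mul_assoc, Nat.choose_mul_factorial_mul_factorial (h j)]

lemma prod_support_pow_add {M : Type*} [CommMonoid M] (k : ℕ → M) (I J : ℕ →₀ ℕ) :
    ∏ j ∈ (I + J).support, k j ^ (I + J) j
      = (∏ j ∈ I.support, k j ^ I j) * ∏ j ∈ J.support, k j ^ J j :=
  Finsupp.prod_add_index' (h := fun j n => k j ^ n) (fun _ => pow_zero _)
    fun _ _ _ => pow_add _ _ _

theorem nuwt_eq_nuwt_mul_nuwt_mul {lam k : ℕ → ℝ} (hlam : ∀ n, lam n ≠ 0) {I J : ℕ →₀ ℕ}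
    (h : J ≤ I) :
    nuwt lam k I = nuwt lam k J * nuwt lam k (I - J) *
      ((mchoose I J : ℝ) * (lam (mdeg J) * lam (mdeg (I - J)))
        / (((mdeg I).choose (mdeg J) : ℝ) * lam (mdeg I))) := by
  have hdeg : mdeg J ≤ mdeg I := mdeg_mono h
  have hfact : (mfact I : ℝ) = mchoose I J * (mfact J * mfact (I - J)) := by
    exact_mod_cast mfact_eq_mchoose_mul h
  have hfactorial : ((mdeg I).factorial : ℝ)
      = (mdeg I).choose (mdeg J) * (mdeg J).factorial * (mdeg (I - J)).factorial := by
    rw [mdeg_tsub h]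
    exact_mod_cast (Nat.choose_mul_factorial_mul_factorial hdeg).symm
  have hk : ∏ j ∈ I.support, k j ^ (2 * I j) = (∏ j ∈ J.support, k j ^ (2 * J j))
      * ∏ j ∈ (I - J).support, k j ^ (2 * (I - J) j) := by
    simp_rw [pow_mul]
    rw [← prod_support_pow_add, add_tsub_cancel_of_le h]
  have hchoose : ((mdeg I).choose (mdeg J) : ℝ) ≠ 0 := by
    exact_mod_cast (Nat.choose_pos hdeg).ne'
  rw [nuwt, nuwt, nuwt, hfact, hfactorial, hk]
  field_simp [hlam (mdeg I), hlam (mdeg J), hlam (mdeg (I - J))]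

lemma mfact_pos (I : ℕ →₀ ℕ) : 0 < mfact I :=
  prod_pos fun _ _ => Nat.factorial_pos _

lemma nuwt_pos {lam k : ℕ → ℝ} (hlam : ∀ n, 0 < lam n) (hk : ∀ j, 0 < k j) (I : ℕ →₀ ℕ) :
    0 < nuwt lam k I := by
  have hfact : (0 : ℝ) < mfact I := by exact_mod_cast mfact_pos I
  have hprod : 0 < ∏ j ∈ I.support, k j ^ (2 * I j) := prod_pos fun j _ => pow_pos (hk j) _
  unfold nuwt
  positivity [hlam (mdeg I)]

theorem sum_Iic_nuwt_div_le {lam k : ℕ → ℝ} (hlam : ∀ n, 0 < lam n) (hk : ∀ j, 0 < k j) {C : ℝ}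
    (hconv : ∀ n, ∑ m ∈ range (n + 1), lam m * lam (n - m) ≤ C * lam n) (I : ℕ →₀ ℕ) :
    ∑ J ∈ Iic I, nuwt lam k I / (nuwt lam k J * nuwt lam k (I - J)) ≤ C := by
  set n := mdeg I with hn
  have hratio : ∀ J ∈ Iic I, nuwt lam k I / (nuwt lam k J * nuwt lam k (I - J))
      = mchoose I J * (lam (mdeg J) * lam (n - mdeg J) / (n.choose (mdeg J) * lam n)) := by
    intro J hJ
    have hJI := mem_Iic.1 hJ
    have hνJ := (nuwt_pos hlam hk J).ne'
    have hνIJ := (nuwt_pos hlam hk (I - J)).ne'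
    rw [nuwt_eq_nuwt_mul_nuwt_mul (fun n => (hlam n).ne') hJI, ← mdeg_tsub hJI, ← hn]
    field_simp
  have hcancel : ∀ m ∈ range (n + 1), (n.choose m : ℝ) *
      (lam m * lam (n - m) / (n.choose m * lam n)) = lam m * lam (n - m) / lam n := by
    intro m hm
    have hchoose : (n.choose m : ℝ) ≠ 0 := by
      exact_mod_cast (Nat.choose_pos (mem_range_succ_iff.1 hm)).ne'
    field_simp
  rw [sum_congr rfl hratio,
    sum_Iic_mchoose_mul I fun m => lam m * lam (n - m) / (n.choose m * lam n),
    sum_congr rfl hcancel, ← sum_div, div_le_iff₀ (hlam n)]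
  exact hconv n

theorem stmt9_general (lam : ℕ → ℝ) (hlam_pos : ∀ n, 0 < lam n)
    (C : ℝ) (hC : 0 < C)
    (hconv : ∀ n : ℕ, ∑ m ∈ Finset.range (n + 1), lam m * lam (n - m) ≤ C * lam n)
    (k : ℕ → ℝ) (hk : ∀ j, 0 < k j) :
    ∃ C' : ℝ, 0 < C' ∧
      ∀ a b : (ℕ →₀ ℕ) → ℂ,
        Summable (fun I => ‖a I‖ ^ 2 * nuwt lam k I) →
        Summable (fun I => ‖b I‖ ^ 2 * nuwt lam k I) →
        Summable (fun I : ℕ →₀ ℕ =>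
          ‖∑ J ∈ Finset.Iic I, a J * b (I - J)‖ ^ 2 * nuwt lam k I) ∧
        ∑' I : ℕ →₀ ℕ, ‖∑ J ∈ Finset.Iic I, a J * b (I - J)‖ ^ 2 * nuwt lam k I ≤
          C' * (∑' I, ‖a I‖ ^ 2 * nuwt lam k I) * (∑' I, ‖b I‖ ^ 2 * nuwt lam k I) := by
  refine ⟨C, hC, fun a b ha hb => ?_⟩
  have hν := nuwt_pos hlam_pos hk
  have hcauchy := hasSum_sum_Iic_mul_of_nonneg (fun I => by positivity [hν I])
    (fun I => by positivity [hν I]) ha hb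
  have hbound : ∀ I, ‖∑ J ∈ Iic I, a J * b (I - J)‖ ^ 2 * nuwt lam k I ≤ C *
      ∑ J ∈ Iic I, ‖a J‖ ^ 2 * nuwt lam k J * (‖b (I - J)‖ ^ 2 * nuwt lam k (I - J)) :=
    fun I => (norm_sum_Iic_mul_sq_mul_le hν a b I).trans <| mul_le_mul_of_nonneg_right
      (sum_Iic_nuwt_div_le hlam_pos hk hconv I)
      (sum_nonneg fun J _ => by positivity [hν J, hν (I - J)])
  have hsummable := Summable.of_nonneg_of_le (fun I => by positivity [hν I]) hbound
    (hcauchy.summable.mul_left C)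
  refine ⟨hsummable, ?_⟩
  calc _ ≤ ∑' I, C * ∑ J ∈ Iic I,
          ‖a J‖ ^ 2 * nuwt lam k J * (‖b (I - J)‖ ^ 2 * nuwt lam k (I - J)) :=
        hsummable.tsum_le_tsum hbound (hcauchy.summable.mul_left C)
    _ = _ := by rw [tsum_mul_left, hcauchy.tsum_eq, mul_assoc]

theorem stmt9 (lam : ℕ → ℝ) (hlam_sum : Summable lam) (hlam_pos : ∀ n, 0 < lam n)
    (C : ℝ) (hC : 0 < C)
    (hconv : ∀ n : ℕ, ∑ m ∈ Finset.range (n + 1), lam m * lam (n - m) ≤ C * lam n)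
    (k : ℕ → ℝ) (hk : ∀ j, 0 < k j) :
    ∃ C' : ℝ, 0 < C' ∧
      ∀ a b : (ℕ →₀ ℕ) → ℂ,
        Summable (fun I => ‖a I‖ ^ 2 * nuwt lam k I) →
        Summable (fun I => ‖b I‖ ^ 2 * nuwt lam k I) →
        Summable (fun I : ℕ →₀ ℕ =>
          ‖∑ J ∈ Finset.Iic I, a J * b (I - J)‖ ^ 2 * nuwt lam k I) ∧
        ∑' I : ℕ →₀ ℕ, ‖∑ J ∈ Finset.Iic I, a J * b (I - J)‖ ^ 2 * nuwt lam k I ≤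
          C' * (∑' I, ‖a I‖ ^ 2 * nuwt lam k I) * (∑' I, ‖b I‖ ^ 2 * nuwt lam k I) :=
  stmt9_general lam hlam_pos C hC hconv k hk
end

section
/- Let λ : ℕ → ℝ with λ(n) > 0 for all n and k : ℕ → ℝ with k(j) > 0. Fix j : ℕ and define, for b : (ℕ →₀ ℕ) → ℂ: (A†_j b)(I) = b(I - e_j)/k(j) when I(j) ≥ 1 and 0 otherwise; (A_j b)(I) = k(j)·(I(j)+1)·(λ(|I|)/((|I|+1)·λ(|I|+1)))·b(I + e_j); (D b)(I) = b(I)/(|I|!·λ(|I|)); and (D⁻¹ b)(I) = |I|!·λ(|I|)·b(I). Then the twisted canonical commutation relation [A_j, A†_j]_D = Id holds: for every b : (ℕ →₀ ℕ) → ℂ and every multi-index I, (D (A_j (D⁻¹ (A†_j b))))(I) - (A†_j (D (A_j (D⁻¹ b))))(I) = b(I). -/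
open scoped BigOperators

/-- The creation operator `(A†_j b)(I) = b(I - e_j)/k(j)` if `I j ≥ 1`, else `0`. -/
noncomputable def creOp (k : ℕ → ℝ) (j : ℕ) (b : (ℕ →₀ ℕ) → ℂ) (I : ℕ →₀ ℕ) : ℂ :=
  if 1 ≤ I j then b (I - Finsupp.single j 1) / (k j : ℂ) else 0

/-- The annihilation operator
`(A_j b)(I) = k(j)·(I(j)+1)·(λ(|I|)/((|I|+1)·λ(|I|+1)))·b(I + e_j)`. -/
noncomputable def annOp (lam : ℕ → ℝ) (k : ℕ → ℝ) (j : ℕ) (b : (ℕ →₀ ℕ) → ℂ)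
    (I : ℕ →₀ ℕ) : ℂ :=
  (k j : ℂ) * ((I j : ℂ) + 1) *
    ((lam (mdeg I) : ℂ) / (((mdeg I : ℂ) + 1) * (lam (mdeg I + 1) : ℂ))) *
    b (I + Finsupp.single j 1)

/-- The diagonal operator `(D b)(I) = b(I)/(|I|!·λ(|I|))`. -/
noncomputable def diagOp (lam : ℕ → ℝ) (b : (ℕ →₀ ℕ) → ℂ) (I : ℕ →₀ ℕ) : ℂ :=
  b I / ((Nat.factorial (mdeg I) : ℂ) * (lam (mdeg I) : ℂ))

/-- The inverse diagonal operator `(D⁻¹ b)(I) = |I|!·λ(|I|)·b(I)`. -/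
noncomputable def diagOpInv (lam : ℕ → ℝ) (b : (ℕ →₀ ℕ) → ℂ) (I : ℕ →₀ ℕ) : ℂ :=
  (Nat.factorial (mdeg I) : ℂ) * (lam (mdeg I) : ℂ) * b I

lemma mdeg_add_single (I : ℕ →₀ ℕ) (j : ℕ) :
    mdeg (I + Finsupp.single j 1) = mdeg I + 1 := by
  unfold mdeg
  rw [Finsupp.sum_add_index' (fun _ => rfl) (fun _ _ _ => rfl),
    Finsupp.sum_single_index rfl]

lemma sub_add_single (I : ℕ →₀ ℕ) (j : ℕ) (h : 1 ≤ I j) :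
    I - Finsupp.single j 1 + Finsupp.single j 1 = I := by
  ext a
  simp only [Finsupp.add_apply, Finsupp.tsub_apply, Finsupp.single_apply]
  by_cases ha : a = j
  · subst ha; simp [Nat.sub_add_cancel h]
  · simp [Ne.symm ha]

lemma add_sub_single (I : ℕ →₀ ℕ) (j : ℕ) :
    I + Finsupp.single j 1 - Finsupp.single j 1 = I := by
  ext a
  simp [Finsupp.tsub_apply]

lemma key1 (kk c x l l' f B : ℂ) (hx : x ≠ 0) (hf : f ≠ 0) (hl : l ≠ 0)
    (hl' : l' ≠ 0) (hk : kk ≠ 0) :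
    kk * c * (l / (x * l')) * (x * f * l' * (B / kk)) / (f * l) = c * B := by
  field_simp

lemma key2 (kk c x l l' f B : ℂ) (hx : x ≠ 0) (hf : f ≠ 0) (hl : l ≠ 0)
    (hl' : l' ≠ 0) (hk : kk ≠ 0) :
    kk * c * (l / (x * l')) * (x * f * l' * B) / (f * l) / kk = c * B := by
  field_simp

theorem stmt11 (lam : ℕ → ℝ) (hlam_pos : ∀ n, 0 < lam n)
    (k : ℕ → ℝ) (hk : ∀ r, 0 < k r) (j : ℕ)
    (b : (ℕ →₀ ℕ) → ℂ) (I : ℕ →₀ ℕ) :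
    diagOp lam (annOp lam k j (diagOpInv lam (creOp k j b))) I -
      creOp k j (diagOp lam (annOp lam k j (diagOpInv lam b))) I = b I := by
  have hkj : (k j : ℂ) ≠ 0 := by exact_mod_cast (hk j).ne'
  have hlamC : ∀ n, (lam n : ℂ) ≠ 0 := fun n => by exact_mod_cast (hlam_pos n).ne'
  have hfac : ∀ n, ((Nat.factorial n : ℂ)) ≠ 0 := fun n => by
    exact_mod_cast (Nat.factorial_pos n).ne'
  have hm1 : ∀ n : ℕ, (n : ℂ) + 1 ≠ 0 := fun n => by
    exact_mod_cast (Nat.succ_ne_zero n)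
  have h1 : diagOp lam (annOp lam k j (diagOpInv lam (creOp k j b))) I
      = ((I j : ℂ) + 1) * b I := by
    simp only [diagOp, annOp, diagOpInv, creOp, mdeg_add_single, add_sub_single]
    rw [if_pos (by simp)]
    rw [Nat.factorial_succ]
    have hMne : ((mdeg I : ℂ) + 1) ≠ 0 := hm1 _
    push_cast
    exact key1 _ _ _ _ _ _ _ hMne (hfac _) (hlamC _) (hlamC _) hkj
  have h2 : creOp k j (diagOp lam (annOp lam k j (diagOpInv lam b))) I
      = (I j : ℂ) * b I := by
    unfold creOp
    by_cases h : 1 ≤ I j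
    · rw [if_pos h]
      have hIeq := sub_add_single I j h
      have hm : mdeg I = mdeg (I - Finsupp.single j 1) + 1 := by
        conv_lhs => rw [← hIeq]
        rw [mdeg_add_single]
      have hJj : (((I - Finsupp.single j 1 : ℕ →₀ ℕ)) j : ℂ) + 1 = (I j : ℂ) := by
        have : ((I - Finsupp.single j 1 : ℕ →₀ ℕ)) j + 1 = I j := by
          simp [Finsupp.tsub_apply, Nat.sub_add_cancel h]
        exact_mod_cast this
      simp only [diagOp, annOp, diagOpInv, hIeq]
      rw [hJj, hm, Nat.factorial_succ]
      have hMne : ((mdeg (I - Finsupp.single j 1) : ℂ) + 1) ≠ 0 := hm1 _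
      push_cast
      exact key2 _ _ _ _ _ _ _ hMne (hfac _) (hlamC _) (hlamC _) hkj
    · rw [if_neg h]
      have : I j = 0 := by omega
      rw [this]
      simp
  rw [h1, h2]; ring
end
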